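/- Let σ be a positional Player-0 strategy in 𝔊^φ and suppose there exist clause vertices c_{i1}, c_{i2} and an index j ∈ [1;m] with σ(c_{i1}) = x_j and σ(c_{i2}) = ¬x_j. Then σ is not winning from v0 in 𝔊^φ: Player 1 has a strategy τ (alternating between the edges (v0, c_{i1}) and (v0, c_{i2}) on successive visits to v0 and taking the edges (x_j, x_j') and (¬x_j, (¬x_j)')) such that the play from v0 compliant with both σ and τ never visits t and satisfies ψ_glive(ℋ). -/
import Mathlib


universe u

/-- A two-player game graph: finite-intended vertex set `V`, an ownership function
(`owner v = 0` means `v` is a Player-0 vertex, `owner v = 1` a Player-1 vertex),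
and an edge relation such that every vertex has at least one outgoing edge. -/
structure GameGraph (V : Type u) where
  owner : V → Fin 2
  E : V → V → Prop
  exists_succ : ∀ v, ∃ w, E v w

variable {V : Type u}

/-- A play of the game graph: an infinite sequence of vertices following edges. -/
def IsPlay (G : GameGraph V) (ρ : ℕ → V) : Prop :=
  ∀ k, G.E (ρ k) (ρ (k + 1))

/-- A (history-dependent) strategy: given the list of previously visited
vertices and the current vertex, it chooses a next vertex. -/
abbrev Strategy (V : Type u) := List V → V → V

/-- A strategy of Player `i` is valid if at each Player-`i` vertex it chooses
an edge of the game graph. -/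
def StratValid (G : GameGraph V) (i : Fin 2) (σ : Strategy V) : Prop :=
  ∀ (h : List V) (v : V), G.owner v = i → G.E v (σ h v)

/-- A positional (memoryless) strategy ignores the history. -/
def Positional (σ : Strategy V) : Prop :=
  ∀ (h h' : List V) (v : V), σ h v = σ h' v

/-- A play is compliant with the strategy `σ` of Player `i` (a `σ`-play) if at
every Player-`i` vertex it moves to the vertex chosen by `σ`. -/
def Compliant (G : GameGraph V) (i : Fin 2) (σ : Strategy V) (ρ : ℕ → V) : Prop :=
  ∀ k, G.owner (ρ k) = i → ρ (k + 1) = σ (List.ofFn fun j : Fin k => ρ j.val) (ρ k)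

/-- `σ` is a winning strategy for Player `i` from `v`, where `W` is the set of
plays that are winning for Player `i`. -/
def WinsFrom (G : GameGraph V) (i : Fin 2) (W : Set (ℕ → V)) (σ : Strategy V) (v : V) : Prop :=
  StratValid G i σ ∧
    ∀ ρ : ℕ → V, IsPlay G ρ → Compliant G i σ ρ → ρ 0 = v → ρ ∈ W

/-- The winning region of Player `i`: the vertices from which Player `i` has a
winning strategy. -/
def WinRegion (G : GameGraph V) (i : Fin 2) (W : Set (ℕ → V)) : Set V :=
  {v | ∃ σ, WinsFrom G i W σ v}

/-- A vertex occurs infinitely often along a play. -/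
def InfOft (ρ : ℕ → V) (v : V) : Prop := ∀ n, ∃ k, n ≤ k ∧ ρ k = v

/-- An edge is taken infinitely often along a play. -/
def EdgeInfOft (ρ : ℕ → V) (e : V × V) : Prop :=
  ∀ n, ∃ k, n ≤ k ∧ ρ k = e.1 ∧ ρ (k + 1) = e.2

/-- Parity objective: the maximal priority occurring infinitely often is even. -/
def ParityWin (P : V → ℕ) (ρ : ℕ → V) : Prop :=
  ∃ v, InfOft ρ v ∧ Even (P v) ∧ ∀ w, InfOft ρ w → P w ≤ P v

/-- The set of source vertices of a set of edges. -/
def srcSet (H : Set (V × V)) : Set V := {u | ∃ w, (u, w) ∈ H}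

/-- Group transition fairness (live group) assumption: for every live group `H`,
if some source vertex of `H` occurs infinitely often, then some edge of `H` is
taken infinitely often. -/
def psiGlive (Hc : Set (Set (V × V))) (ρ : ℕ → V) : Prop :=
  ∀ H ∈ Hc, (∃ u ∈ srcSet H, InfOft ρ u) → ∃ e ∈ H, EdgeInfOft ρ e

/-- Vertices of the game `𝔊^φ` built from a 3-SAT formula `φ` with `k` clauses
over `m` variables: the Player-1 vertex `v0`, a Player-0 vertex per clause,
Player-1 vertices `lit x b` (the literal `x_x` if `b = true`, `¬x_x` if
`b = false`) and `litP x b` (the primed copy `y'`), and the Player-0 target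
vertex `target` (the vertex `☺`). -/
inductive SatV (m k : ℕ) : Type
  | v0 : SatV m k
  | clause : Fin k → SatV m k
  | lit : Fin m → Bool → SatV m k
  | litP : Fin m → Bool → SatV m k
  | target : SatV m k

/-- Ownership: clause vertices and the target belong to Player 0, all other
vertices to Player 1. -/
def satOwner {m k : ℕ} : SatV m k → Fin 2
  | SatV.clause _ => 0
  | SatV.target => 0
  | _ => 1

/-- Edges of `𝔊^φ`, where `φ i j` is the `j`-th literal of the `i`-th clause. -/
def satE {m k : ℕ} (φ : Fin k → Fin 3 → Fin m × Bool) : SatV m k → SatV m k → Prop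
  | SatV.v0, SatV.clause _ => True
  | SatV.clause i, SatV.lit x b => ∃ j, φ i j = (x, b)
  | SatV.lit _ _, SatV.target => True
  | SatV.lit x b, SatV.litP y c => x = y ∧ b = c
  | SatV.litP _ _, SatV.v0 => True
  | SatV.target, SatV.target => True
  | _, _ => False

/-- The game graph of `𝔊^φ`. -/
def satGame {m k : ℕ} (φ : Fin k → Fin 3 → Fin m × Bool) (hk : 0 < k) :
    GameGraph (SatV m k) where
  owner := satOwner
  E := satE φ
  exists_succ := by
    intro v
    cases v with
    | v0 => exact ⟨SatV.clause ⟨0, hk⟩, trivial⟩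
    | clause i => exact ⟨SatV.lit (φ i 0).1 (φ i 0).2, ⟨0, rfl⟩⟩
    | lit x b => exact ⟨SatV.target, trivial⟩
    | litP x b => exact ⟨SatV.v0, trivial⟩
    | target => exact ⟨SatV.target, trivial⟩

/-- The live group `H_x^1 = {(x_x, ☺), ((¬x_x)', v0)}`. -/
def liveH1 {m k : ℕ} (x : Fin m) : Set (SatV m k × SatV m k) :=
  {(SatV.lit x true, SatV.target), (SatV.litP x false, SatV.v0)}

/-- The live group `H_x^2 = {(¬x_x, ☺), (x_x', v0)}`. -/
def liveH2 {m k : ℕ} (x : Fin m) : Set (SatV m k × SatV m k) :=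
  {(SatV.lit x false, SatV.target), (SatV.litP x true, SatV.v0)}

/-- The set `ℋ = {H_x^1, H_x^2 : x}` of live groups of `𝔊^φ`. -/
def satH (m k : ℕ) : Set (Set (SatV m k × SatV m k)) :=
  {H | ∃ x : Fin m, H = liveH1 x ∨ H = liveH2 x}

/-- The set of plays winning for Player 0 in the augmented reachability game
`𝔊^φ = (G, ◇{☺}, ψ_glive(ℋ))`. -/
def satWin0 (m k : ℕ) : Set (ℕ → SatV m k) :=
  {ρ | psiGlive (satH m k) ρ → ∃ n, ρ n = SatV.target}

/-- The period-8 cycle of vertices visited by the counter-play. -/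
def cyc8 {m k : ℕ} (i1 i2 : Fin k) (j : Fin m) : ℕ → SatV m k
  | 0 => SatV.v0
  | 1 => SatV.clause i1
  | 2 => SatV.lit j true
  | 3 => SatV.litP j true
  | 4 => SatV.v0
  | 5 => SatV.clause i2
  | 6 => SatV.lit j false
  | 7 => SatV.litP j false
  | _ => SatV.v0

/-- The counter-play. -/
def rho0 {m k : ℕ} (i1 i2 : Fin k) (j : Fin m) (n : ℕ) : SatV m k :=
  cyc8 i1 i2 j (n % 8)

/-- Player 1's counter-strategy. -/
def tauStrat {m k : ℕ} (φ : Fin k → Fin 3 → Fin m × Bool) (i1 i2 : Fin k) :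
    Strategy (SatV m k) :=
  fun h v => match v with
    | SatV.v0 => if h.length % 8 = 0 then SatV.clause i1 else SatV.clause i2
    | SatV.clause i => SatV.lit (φ i 0).1 (φ i 0).2
    | SatV.lit x b => SatV.litP x b
    | SatV.litP _ _ => SatV.v0
    | SatV.target => SatV.target

lemma rho0_ne_target {m k : ℕ} (i1 i2 : Fin k) (j : Fin m) (n : ℕ) :
    rho0 i1 i2 j n ≠ SatV.target := by
  have h8 : n % 8 = 0 ∨ n % 8 = 1 ∨ n % 8 = 2 ∨ n % 8 = 3 ∨ n % 8 = 4 ∨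
      n % 8 = 5 ∨ n % 8 = 6 ∨ n % 8 = 7 := by omega
  unfold rho0
  rcases h8 with h | h | h | h | h | h | h | h <;> rw [h] <;> simp [cyc8]

lemma rho0_psiGlive {m k : ℕ} (i1 i2 : Fin k) (j : Fin m) :
    psiGlive (satH m k) (rho0 i1 i2 j) := by
  rintro H ⟨x, hx | hx⟩ ⟨u, ⟨w, hw⟩, hinf⟩
  · subst hx
    by_cases hxj : x = j
    · subst hxj
      refine ⟨(SatV.litP x false, SatV.v0), Or.inr rfl, fun n => ⟨8 * n + 7, by omega, ?_, ?_⟩⟩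
      · show cyc8 i1 i2 x ((8 * n + 7) % 8) = _
        have : (8 * n + 7) % 8 = 7 := by omega
        rw [this]; rfl
      · show cyc8 i1 i2 x ((8 * n + 7 + 1) % 8) = _
        have : (8 * n + 7 + 1) % 8 = 0 := by omega
        rw [this]; rfl
    · exfalso
      obtain ⟨kk, -, hkk⟩ := hinf 0
      have h8 : kk % 8 = 0 ∨ kk % 8 = 1 ∨ kk % 8 = 2 ∨ kk % 8 = 3 ∨ kk % 8 = 4 ∨
          kk % 8 = 5 ∨ kk % 8 = 6 ∨ kk % 8 = 7 := by omega
      unfold rho0 at hkk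
      simp only [liveH1, Set.mem_insert_iff, Set.mem_singleton_iff, Prod.mk.injEq] at hw
      rcases hw with ⟨hu, -⟩ | ⟨hu, -⟩ <;> subst hu <;>
        rcases h8 with h | h | h | h | h | h | h | h <;> rw [h] at hkk <;>
          simp [cyc8] at hkk <;> first | exact hxj hkk.symm | exact hxj hkk.1.symm
  · subst hx
    by_cases hxj : x = j
    · subst hxj
      refine ⟨(SatV.litP x true, SatV.v0), Or.inr rfl, fun n => ⟨8 * n + 3, by omega, ?_, ?_⟩⟩
      · show cyc8 i1 i2 x ((8 * n + 3) % 8) = _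
        have : (8 * n + 3) % 8 = 3 := by omega
        rw [this]; rfl
      · show cyc8 i1 i2 x ((8 * n + 3 + 1) % 8) = _
        have : (8 * n + 3 + 1) % 8 = 4 := by omega
        rw [this]; rfl
    · exfalso
      obtain ⟨kk, -, hkk⟩ := hinf 0
      have h8 : kk % 8 = 0 ∨ kk % 8 = 1 ∨ kk % 8 = 2 ∨ kk % 8 = 3 ∨ kk % 8 = 4 ∨
          kk % 8 = 5 ∨ kk % 8 = 6 ∨ kk % 8 = 7 := by omega
      unfold rho0 at hkk
      simp only [liveH2, Set.mem_insert_iff, Set.mem_singleton_iff, Prod.mk.injEq] at hw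
      rcases hw with ⟨hu, -⟩ | ⟨hu, -⟩ <;> subst hu <;>
        rcases h8 with h | h | h | h | h | h | h | h <;> rw [h] at hkk <;>
          simp [cyc8] at hkk <;> first | exact hxj hkk.symm | exact hxj hkk.1.symm

lemma key_play {m k : ℕ} (hk : 0 < k) (φ : Fin k → Fin 3 → Fin m × Bool)
    (σ : Strategy (SatV m k)) (i1 i2 : Fin k) (j : Fin m)
    (h1 : ∀ h, σ h (SatV.clause i1) = SatV.lit j true)
    (h2 : ∀ h, σ h (SatV.clause i2) = SatV.lit j false)
    (ρ : ℕ → SatV m k)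
    (hc0 : Compliant (satGame φ hk) 0 σ ρ)
    (hc1 : Compliant (satGame φ hk) 1 (tauStrat φ i1 i2) ρ)
    (h0 : ρ 0 = SatV.v0) : ∀ n, ρ n = rho0 i1 i2 j n := by
  intro n
  induction n with
  | zero => rw [h0]; rfl
  | succ n ih =>
    have hlen : (List.ofFn fun j : Fin n => ρ j.val).length = n := by simp
    have h8 : n % 8 = 0 ∨ n % 8 = 1 ∨ n % 8 = 2 ∨ n % 8 = 3 ∨ n % 8 = 4 ∨
        n % 8 = 5 ∨ n % 8 = 6 ∨ n % 8 = 7 := by omega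
    unfold rho0 at ih ⊢
    rcases h8 with h | h | h | h | h | h | h | h
    all_goals rw [h] at ih
    · have hn : ρ n = SatV.v0 := ih
      have hs := hc1 n (by rw [hn]; rfl)
      rw [hn] at hs
      have : (n + 1) % 8 = 1 := by omega
      rw [this, hs]
      simp [tauStrat, hlen, h]
      rfl
    · have hn : ρ n = SatV.clause i1 := ih
      have hs := hc0 n (by rw [hn]; rfl)
      rw [hn, h1] at hs
      have : (n + 1) % 8 = 2 := by omega
      rw [this, hs]; rfl
    · have hn : ρ n = SatV.lit j true := ih
      have hs := hc1 n (by rw [hn]; rfl)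
      rw [hn] at hs
      have : (n + 1) % 8 = 3 := by omega
      rw [this, hs]; rfl
    · have hn : ρ n = SatV.litP j true := ih
      have hs := hc1 n (by rw [hn]; rfl)
      rw [hn] at hs
      have : (n + 1) % 8 = 4 := by omega
      rw [this, hs]; rfl
    · have hn : ρ n = SatV.v0 := ih
      have hs := hc1 n (by rw [hn]; rfl)
      rw [hn] at hs
      have : (n + 1) % 8 = 5 := by omega
      rw [this, hs]
      simp [tauStrat, hlen, h]
      rfl
    · have hn : ρ n = SatV.clause i2 := ih
      have hs := hc0 n (by rw [hn]; rfl)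
      rw [hn, h2] at hs
      have : (n + 1) % 8 = 6 := by omega
      rw [this, hs]; rfl
    · have hn : ρ n = SatV.lit j false := ih
      have hs := hc1 n (by rw [hn]; rfl)
      rw [hn] at hs
      have : (n + 1) % 8 = 7 := by omega
      rw [this, hs]; rfl
    · have hn : ρ n = SatV.litP j false := ih
      have hs := hc1 n (by rw [hn]; rfl)
      rw [hn] at hs
      have : (n + 1) % 8 = 0 := by omega
      rw [this, hs]; rfl

/-- If a positional Player-0 strategy `σ` in `𝔊^φ` sends some
clause vertex `c_{i1}` to the literal `x_j` and some clause vertex `c_{i2}` to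
the literal `¬x_j`, then `σ` is not winning from `v0`: Player 1 has a strategy
`τ` such that the play from `v0` compliant with both `σ` and `τ` never visits
the target and satisfies `ψ_glive(ℋ)`. -/
theorem stmt7 (m k : ℕ) (hk : 0 < k) (φ : Fin k → Fin 3 → Fin m × Bool)
    (σ : Strategy (SatV m k))
    (hpos : Positional σ)
    (hvalid : StratValid (satGame φ hk) 0 σ)
    (i1 i2 : Fin k) (j : Fin m)
    (h1 : ∀ h, σ h (SatV.clause i1) = SatV.lit j true)
    (h2 : ∀ h, σ h (SatV.clause i2) = SatV.lit j false) :
    ¬ WinsFrom (satGame φ hk) 0 (satWin0 m k) σ SatV.v0 ∧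
      ∃ τ : Strategy (SatV m k), StratValid (satGame φ hk) 1 τ ∧
        ∀ ρ : ℕ → SatV m k, IsPlay (satGame φ hk) ρ →
          Compliant (satGame φ hk) 0 σ ρ → Compliant (satGame φ hk) 1 τ ρ →
          ρ 0 = SatV.v0 →
          (∀ n, ρ n ≠ SatV.target) ∧ psiGlive (satH m k) ρ := by
  have e1 : satE φ (SatV.clause i1) (SatV.lit j true) := by
    have := hvalid [] (SatV.clause i1) rfl
    rwa [h1] at this
  have e2 : satE φ (SatV.clause i2) (SatV.lit j false) := by
    have := hvalid [] (SatV.clause i2) rfl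
    rwa [h2] at this
  constructor
  · rintro ⟨-, hwin⟩
    have hplay : IsPlay (satGame φ hk) (rho0 i1 i2 j) := by
      intro n
      have h8 : n % 8 = 0 ∨ n % 8 = 1 ∨ n % 8 = 2 ∨ n % 8 = 3 ∨ n % 8 = 4 ∨
          n % 8 = 5 ∨ n % 8 = 6 ∨ n % 8 = 7 := by omega
      show satE φ (cyc8 i1 i2 j (n % 8)) (cyc8 i1 i2 j ((n + 1) % 8))
      rcases h8 with h | h | h | h | h | h | h | h <;>
        [ (have h' : (n + 1) % 8 = 1 := by omega);
          (have h' : (n + 1) % 8 = 2 := by omega);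
          (have h' : (n + 1) % 8 = 3 := by omega);
          (have h' : (n + 1) % 8 = 4 := by omega);
          (have h' : (n + 1) % 8 = 5 := by omega);
          (have h' : (n + 1) % 8 = 6 := by omega);
          (have h' : (n + 1) % 8 = 7 := by omega);
          (have h' : (n + 1) % 8 = 0 := by omega)] <;>
        rw [h, h'] <;>
        first
          | exact trivial
          | exact e1
          | exact e2
          | exact ⟨rfl, rfl⟩
    have hcomp : Compliant (satGame φ hk) 0 σ (rho0 i1 i2 j) := by
      intro n howner
      have h8 : n % 8 = 0 ∨ n % 8 = 1 ∨ n % 8 = 2 ∨ n % 8 = 3 ∨ n % 8 = 4 ∨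
          n % 8 = 5 ∨ n % 8 = 6 ∨ n % 8 = 7 := by omega
      rcases h8 with h | h | h | h | h | h | h | h
      · have hn : rho0 i1 i2 j n = SatV.v0 := by unfold rho0; rw [h]; rfl
        rw [hn] at howner
        have h10 : (1 : Fin 2) = 0 := howner
        exact absurd h10 (by decide)
      · have hn : rho0 i1 i2 j n = SatV.clause i1 := by unfold rho0; rw [h]; rfl
        rw [hn, h1]
        show cyc8 i1 i2 j ((n + 1) % 8) = _
        have h' : (n + 1) % 8 = 2 := by omega
        rw [h']; rfl
      · have hn : rho0 i1 i2 j n = SatV.lit j true := by unfold rho0; rw [h]; rfl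
        rw [hn] at howner
        have h10 : (1 : Fin 2) = 0 := howner
        exact absurd h10 (by decide)
      · have hn : rho0 i1 i2 j n = SatV.litP j true := by unfold rho0; rw [h]; rfl
        rw [hn] at howner
        have h10 : (1 : Fin 2) = 0 := howner
        exact absurd h10 (by decide)
      · have hn : rho0 i1 i2 j n = SatV.v0 := by unfold rho0; rw [h]; rfl
        rw [hn] at howner
        have h10 : (1 : Fin 2) = 0 := howner
        exact absurd h10 (by decide)
      · have hn : rho0 i1 i2 j n = SatV.clause i2 := by unfold rho0; rw [h]; rfl
        rw [hn, h2]
        show cyc8 i1 i2 j ((n + 1) % 8) = _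
        have h' : (n + 1) % 8 = 6 := by omega
        rw [h']; rfl
      · have hn : rho0 i1 i2 j n = SatV.lit j false := by unfold rho0; rw [h]; rfl
        rw [hn] at howner
        have h10 : (1 : Fin 2) = 0 := howner
        exact absurd h10 (by decide)
      · have hn : rho0 i1 i2 j n = SatV.litP j false := by unfold rho0; rw [h]; rfl
        rw [hn] at howner
        have h10 : (1 : Fin 2) = 0 := howner
        exact absurd h10 (by decide)
    obtain ⟨n, hn⟩ := hwin _ hplay hcomp rfl (rho0_psiGlive i1 i2 j)
    exact rho0_ne_target i1 i2 j n hn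
  · refine ⟨tauStrat φ i1 i2, ?_, ?_⟩
    · intro h v hv
      cases v with
      | v0 =>
        show satE φ SatV.v0 (tauStrat φ i1 i2 h SatV.v0)
        simp only [tauStrat]
        split <;> trivial
      | clause i =>
        have h01 : (0 : Fin 2) = 1 := hv
        exact absurd h01 (by decide)
      | lit x b => exact ⟨rfl, rfl⟩
      | litP x b => exact trivial
      | target =>
        have h01 : (0 : Fin 2) = 1 := hv
        exact absurd h01 (by decide)
    · intro ρ _ hc0 hc1 h0
      have heq : ρ = rho0 i1 i2 j :=
        funext (key_play hk φ σ i1 i2 j h1 h2 ρ hc0 hc1 h0)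
      subst heq
      exact ⟨rho0_ne_target i1 i2 j, rho0_psiGlive i1 i2 j⟩
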